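/- Fix T > 0 and a map Γ⁰ : ℝ^d × C([0,T], ℝ^m) → C([0,T], ℝ^d) with the property: for every N < ∞, whenever x_n → x in ℝ^d and h_n ∈ L²([0,T]; ℝ^m) with ∫₀ᵀ|h_n(s)|²ds ≤ N converge weakly in L² to h, the functions Γ⁰(x_n, ∫₀^· h_n(s)ds) converge uniformly on [0,T] to Γ⁰(x, ∫₀^· h(s)ds). For x ∈ ℝ^d and f ∈ C([0,T], ℝ^d) define I_x(f) = inf{ (1/2)∫₀ᵀ|h(s)|²ds : h ∈ L²([0,T]; ℝ^m), f = Γ⁰(x, ∫₀^· h(s)ds) }, with inf ∅ = +∞. Then for every fixed f ∈ C([0,T], ℝ^d), the map x ↦ I_x(f) is lower semicontinuous on ℝ^d. -/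

import Mathlib

open MeasureTheory Filter
open scoped RealInnerProductSpace ENNReal

/-- The path `t ↦ ∫₀ᵗ h(s) ds`. -/
noncomputable def primitivePath (m : ℕ) (h : ℝ → EuclideanSpace ℝ (Fin m)) :
    ℝ → EuclideanSpace ℝ (Fin m) :=
  fun t => ∫ s in Set.Ioc 0 t, h s

/-- The rate function `I_x(f)`, with `inf ∅ = +∞` (values in `ℝ≥0∞`). -/
noncomputable def rateFn (d m : ℕ) (T : ℝ)
    (Γ : EuclideanSpace ℝ (Fin d) → (ℝ → EuclideanSpace ℝ (Fin m)) →
      C(Set.Icc (0:ℝ) T, EuclideanSpace ℝ (Fin d)))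
    (x : EuclideanSpace ℝ (Fin d))
    (f : C(Set.Icc (0:ℝ) T, EuclideanSpace ℝ (Fin d))) : ℝ≥0∞ :=
  sInf { c : ℝ≥0∞ | ∃ h : ℝ → EuclideanSpace ℝ (Fin m),
    MemLp h 2 (volume.restrict (Set.Icc 0 T)) ∧
    f = Γ x (primitivePath m h) ∧
    c = ENNReal.ofReal ((1 / 2) * ∫ s in Set.Ioc 0 T, ‖h s‖ ^ 2) }


/-- Weak sequential compactness of bounded sequences in a separable real Hilbert space. -/
lemma exists_weak_subseq_limit
    {H : Type*} [NormedAddCommGroup H] [InnerProductSpace ℝ H]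
    [CompleteSpace H] [TopologicalSpace.SeparableSpace H]
    (f : ℕ → H) (M : ℝ) (hM : ∀ n, ‖f n‖ ≤ M) :
    ∃ (g : H) (φ : ℕ → ℕ), StrictMono φ ∧
      ∀ y : H, Tendsto (fun n => ⟪f (φ n), y⟫) atTop (nhds ⟪g, y⟫) := by
  have hM0 : 0 ≤ M := (norm_nonneg _).trans (hM 0)
  haveI : Nonempty H := ⟨0⟩
  set u : ℕ → H := TopologicalSpace.denseSeq H with hu
  have hudense : DenseRange u := TopologicalSpace.denseRange_denseSeq H
  set S : Set (ℕ → ℝ) := Set.univ.pi (fun k => Set.Icc (-(M * ‖u k‖)) (M * ‖u k‖)) with hS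
  have hScomp : IsCompact S := isCompact_univ_pi (fun k => isCompact_Icc)
  have hmem : ∀ n, (fun k => ⟪f n, u k⟫) ∈ S := by
    intro n
    rw [Set.mem_univ_pi]
    intro k
    rw [Set.mem_Icc, ← abs_le]
    calc |⟪f n, u k⟫| ≤ ‖f n‖ * ‖u k‖ := abs_real_inner_le_norm _ _
      _ ≤ M * ‖u k‖ := mul_le_mul_of_nonneg_right (hM n) (norm_nonneg _)
  obtain ⟨L0, -, φ, hφ, hconv⟩ := hScomp.tendsto_subseq hmem
  have hcoord : ∀ k, Tendsto (fun n => ⟪f (φ n), u k⟫) atTop (nhds (L0 k)) :=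
    fun k => (tendsto_pi_nhds.mp hconv) k
  have hC : ∀ y : H, CauchySeq (fun n => ⟪f (φ n), y⟫) := by
    intro y
    rw [Metric.cauchySeq_iff]
    intro ε hε
    obtain ⟨k, hk⟩ := hudense.exists_dist_lt y (show (0:ℝ) < ε / (4 * (M + 1)) by positivity)
    have hck : CauchySeq (fun n => ⟪f (φ n), u k⟫) := (hcoord k).cauchySeq
    rw [Metric.cauchySeq_iff] at hck
    obtain ⟨N, hN⟩ := hck (ε / 2) (by positivity)
    refine ⟨N, fun p hp q hq => ?_⟩
    have hyk : ‖y - u k‖ ≤ ε / (4 * (M + 1)) := by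
      rw [← dist_eq_norm]
      exact hk.le
    have hstep : ∀ n : ℕ, dist (⟪f (φ n), y⟫) (⟪f (φ n), u k⟫) ≤ ε / 4 := by
      intro n
      rw [Real.dist_eq, ← inner_sub_right]
      calc |⟪f (φ n), y - u k⟫| ≤ ‖f (φ n)‖ * ‖y - u k‖ := abs_real_inner_le_norm _ _
        _ ≤ M * (ε / (4 * (M + 1))) := mul_le_mul (hM _) hyk (norm_nonneg _) hM0
        _ = ε * (M / (M + 1)) / 4 := by
            field_simp
        _ ≤ ε * 1 / 4 := by
            gcongr
            exact div_le_one_of_le₀ (by linarith) (by linarith)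
        _ = ε / 4 := by ring
    have h4 := dist_triangle4 (⟪f (φ p), y⟫) (⟪f (φ p), u k⟫) (⟪f (φ q), u k⟫)
      (⟪f (φ q), y⟫)
    have hmid := hN p hp q hq
    have hl := hstep p
    have hr := hstep q
    rw [dist_comm] at hr
    calc dist (⟪f (φ p), y⟫) (⟪f (φ q), y⟫) ≤ _ := h4
      _ < ε := by linarith
  have hex : ∀ y : H, ∃ l : ℝ, Tendsto (fun n => ⟪f (φ n), y⟫) atTop (nhds l) :=
    fun y => cauchySeq_tendsto_of_complete (hC y)
  choose L hL using hex
  have hadd : ∀ y z : H, L (y + z) = L y + L z := by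
    intro y z
    refine tendsto_nhds_unique ?_ ((hL y).add (hL z))
    simpa [inner_add_right] using hL (y + z)
  have hsmul : ∀ (c : ℝ) (y : H), L (c • y) = c * L y := by
    intro c y
    refine tendsto_nhds_unique ?_ ((hL y).const_mul c)
    simpa [real_inner_smul_right] using hL (c • y)
  have hbound : ∀ y : H, ‖L y‖ ≤ M * ‖y‖ := by
    intro y
    rw [Real.norm_eq_abs]
    refine le_of_tendsto (hL y).abs (Eventually.of_forall fun n => ?_)
    exact (abs_real_inner_le_norm _ _).trans
      (mul_le_mul_of_nonneg_right (hM _) (norm_nonneg _))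
  let Lm : H →ₗ[ℝ] ℝ := { toFun := L, map_add' := hadd, map_smul' := hsmul }
  let Lc : H →L[ℝ] ℝ := Lm.mkContinuous M hbound
  refine ⟨(InnerProductSpace.toDual ℝ H).symm Lc, φ, hφ, fun y => ?_⟩
  rw [InnerProductSpace.toDual_symm_apply]
  exact hL y

/-- The `L²` inner product of `toLp` representatives equals the set integral over `Ioc 0 T`. -/
lemma inner_toLp_eq (m : ℕ) (T : ℝ)
    {h₁ h₂ : ℝ → EuclideanSpace ℝ (Fin m)}
    (H₁ : MemLp h₁ 2 (volume.restrict (Set.Icc 0 T)))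
    (H₂ : MemLp h₂ 2 (volume.restrict (Set.Icc 0 T))) :
    ⟪H₁.toLp h₁, H₂.toLp h₂⟫ = ∫ s in Set.Ioc 0 T, ⟪h₁ s, h₂ s⟫ := by
  rw [MeasureTheory.L2.inner_def]
  rw [show (∫ a, ⟪(H₁.toLp h₁) a, (H₂.toLp h₂) a⟫ ∂(volume.restrict (Set.Icc 0 T)))
      = ∫ a, ⟪h₁ a, h₂ a⟫ ∂(volume.restrict (Set.Icc 0 T)) from
    integral_congr_ae (by
      filter_upwards [H₁.coeFn_toLp, H₂.coeFn_toLp] with a e₁ e₂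
      rw [e₁, e₂])]
  exact MeasureTheory.integral_Icc_eq_integral_Ioc

/-- If `Γ⁰` is jointly continuous along weakly convergent controls with
bounded energy, then `x ↦ I_x(f)` is lower semicontinuous for each fixed `f`. -/
theorem rateFn_lowerSemicontinuous
    (d m : ℕ) (T : ℝ) (hT : 0 < T)
    (Γ : EuclideanSpace ℝ (Fin d) → (ℝ → EuclideanSpace ℝ (Fin m)) →
      C(Set.Icc (0:ℝ) T, EuclideanSpace ℝ (Fin d)))
    (hΓ : ∀ N : ℝ, ∀ x : EuclideanSpace ℝ (Fin d),
      ∀ xn : ℕ → EuclideanSpace ℝ (Fin d),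
      ∀ hn : ℕ → ℝ → EuclideanSpace ℝ (Fin m),
      ∀ h : ℝ → EuclideanSpace ℝ (Fin m),
      Tendsto xn atTop (nhds x) →
      (∀ n, MemLp (hn n) 2 (volume.restrict (Set.Icc 0 T))) →
      MemLp h 2 (volume.restrict (Set.Icc 0 T)) →
      (∀ n, (∫ s in Set.Ioc 0 T, ‖hn n s‖ ^ 2) ≤ N) →
      -- weak convergence in L²:
      (∀ g : ℝ → EuclideanSpace ℝ (Fin m), MemLp g 2 (volume.restrict (Set.Icc 0 T)) →
        Tendsto (fun n => ∫ s in Set.Ioc 0 T, ⟪hn n s, g s⟫) atTop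
          (nhds (∫ s in Set.Ioc 0 T, ⟪h s, g s⟫))) →
      Tendsto (fun n => Γ (xn n) (primitivePath m (hn n))) atTop
        (nhds (Γ x (primitivePath m h))))
    (f : C(Set.Icc (0:ℝ) T, EuclideanSpace ℝ (Fin d))) :
    LowerSemicontinuous (fun x => rateFn d m T Γ x f) := by
  rw [lowerSemicontinuous_iff_isClosed_preimage]
  intro r
  rcases eq_or_ne r ⊤ with hr | hr
  · subst hr
    have huniv : (fun x => rateFn d m T Γ x f) ⁻¹' Set.Iic ⊤ = Set.univ := by
      ext x; simp
    rw [huniv]; exact isClosed_univ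
  refine IsSeqClosed.isClosed ?_
  intro xs x hxs hlim
  simp only [Set.mem_preimage, Set.mem_Iic] at hxs ⊢
  have hrtop : r < ⊤ := lt_top_iff_ne_top.mpr hr
  have hrT0 : (0:ℝ) ≤ r.toReal := ENNReal.toReal_nonneg
  -- pick near-optimal controls
  have hpick : ∀ n : ℕ, ∃ h : ℝ → EuclideanSpace ℝ (Fin m),
      MemLp h 2 (volume.restrict (Set.Icc 0 T)) ∧
      f = Γ (xs n) (primitivePath m h) ∧
      (1/2) * (∫ s in Set.Ioc 0 T, ‖h s‖^2) ≤ r.toReal + 1/((n:ℝ)+1) := by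
    intro n
    have hε0 : (0:ℝ) < 1/((n:ℝ)+1) := by positivity
    have h1 : rateFn d m T Γ (xs n) f < r + ENNReal.ofReal (1/((n:ℝ)+1)) :=
      lt_of_le_of_lt (hxs n)
        (ENNReal.lt_add_right hr (ENNReal.ofReal_pos.mpr hε0).ne')
    unfold rateFn at h1
    obtain ⟨c, hcmem, hclt⟩ := sInf_lt_iff.mp h1
    obtain ⟨h, hmemh, hfeq, hc⟩ := hcmem
    refine ⟨h, hmemh, hfeq, ?_⟩
    subst hc
    have hnn : (0:ℝ) ≤ (1/2) * ∫ s in Set.Ioc 0 T, ‖h s‖^2 := by positivity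
    have h2 := ENNReal.toReal_mono
      (ENNReal.add_ne_top.mpr ⟨hr, ENNReal.ofReal_ne_top⟩) hclt.le
    rw [ENNReal.toReal_ofReal hnn, ENNReal.toReal_add hr ENNReal.ofReal_ne_top,
      ENNReal.toReal_ofReal hε0.le] at h2
    exact h2
  choose hfun hfunMem hfunEq hfunBd using hpick
  have hEbd : ∀ n, (∫ s in Set.Ioc 0 T, ‖hfun n s‖^2) ≤ 2 * r.toReal + 2/((n:ℝ)+1) := by
    intro n
    have h1 := hfunBd n
    have h2 : (2:ℝ)/((n:ℝ)+1) = 2*(1/((n:ℝ)+1)) := by ring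
    rw [h2]; linarith
  have hEbd' : ∀ n, (∫ s in Set.Ioc 0 T, ‖hfun n s‖^2) ≤ 2 * r.toReal + 2 := by
    intro n
    refine (hEbd n).trans ?_
    have h21 : (2:ℝ)/((n:ℝ)+1) ≤ 2 := by
      rw [div_le_iff₀ (by positivity)]
      have hn0 : (0:ℝ) ≤ (n:ℝ) := Nat.cast_nonneg n
      nlinarith [hn0]
    linarith
  set F : ℕ → MeasureTheory.Lp (EuclideanSpace ℝ (Fin m)) 2
      (volume.restrict (Set.Icc (0:ℝ) T)) :=
    fun n => (hfunMem n).toLp (hfun n) with hFdef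
  have hFnormsq : ∀ n, ‖F n‖^2 = ∫ s in Set.Ioc 0 T, ‖hfun n s‖^2 := by
    intro n
    rw [← real_inner_self_eq_norm_sq, hFdef]
    rw [inner_toLp_eq m T (hfunMem n) (hfunMem n)]
    simp_rw [real_inner_self_eq_norm_sq]
  have hFbd : ∀ n, ‖F n‖ ≤ Real.sqrt (2 * r.toReal + 2) :=
    fun n => Real.le_sqrt_of_sq_le (by rw [hFnormsq n]; exact hEbd' n)
  haveI hsep : MeasureTheory.IsSeparable (volume.restrict (Set.Icc (0:ℝ) T)) := by
    infer_instance
  haveI hfact : Fact ((2:ℝ≥0∞) ≠ ⊤) := ⟨by norm_num⟩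
  haveI := MeasureTheory.Lp.SecondCountableTopology
    (E := EuclideanSpace ℝ (Fin m)) (μ := volume.restrict (Set.Icc (0:ℝ) T)) (p := 2)
  obtain ⟨G, φ, hφ, hweak⟩ := exists_weak_subseq_limit F _ hFbd
  have hGmem : MemLp (⇑G) 2 (volume.restrict (Set.Icc (0:ℝ) T)) :=
    MeasureTheory.Lp.memLp G
  have hGtoLp : hGmem.toLp ⇑G = G := MeasureTheory.Lp.toLp_coeFn G hGmem
  have hweak' : ∀ g : ℝ → EuclideanSpace ℝ (Fin m),
      MemLp g 2 (volume.restrict (Set.Icc (0:ℝ) T)) →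
      Tendsto (fun n => ∫ s in Set.Ioc 0 T, ⟪hfun (φ n) s, g s⟫) atTop
        (nhds (∫ s in Set.Ioc 0 T, ⟪(⇑G) s, g s⟫)) := by
    intro g hg
    have h1 := hweak (hg.toLp g)
    have h3 : ⟪G, hg.toLp g⟫ = ∫ s in Set.Ioc 0 T, ⟪(⇑G) s, g s⟫ := by
      conv_lhs => rw [← hGtoLp]
      exact inner_toLp_eq m T hGmem hg
    rw [h3] at h1
    exact h1.congr (fun n => inner_toLp_eq m T (hfunMem (φ n)) hg)
  have hxφ : Tendsto (fun n => xs (φ n)) atTop (nhds x) := hlim.comp hφ.tendsto_atTop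
  have hΓconv := hΓ (2 * r.toReal + 2) x (fun n => xs (φ n)) (fun n => hfun (φ n)) ⇑G
    hxφ (fun n => hfunMem (φ n)) hGmem (fun n => hEbd' (φ n)) hweak'
  have hfeqG : f = Γ x (primitivePath m ⇑G) := by
    have hconst : (fun n => Γ (xs (φ n)) (primitivePath m (hfun (φ n)))) = fun _ => f :=
      funext fun n => (hfunEq (φ n)).symm
    rw [hconst] at hΓconv
    exact tendsto_nhds_unique tendsto_const_nhds hΓconv
  have hGnormsq : ‖G‖^2 = ∫ s in Set.Ioc 0 T, ‖(⇑G) s‖^2 := by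
    rw [← real_inner_self_eq_norm_sq]
    conv_lhs => rw [← hGtoLp]
    rw [inner_toLp_eq m T hGmem hGmem]
    simp_rw [real_inner_self_eq_norm_sq]
  have hb : ∀ n, ⟪F (φ n), G⟫ ≤ Real.sqrt (2*r.toReal + 2/((φ n:ℝ)+1)) * ‖G‖ := by
    intro n
    refine (real_inner_le_norm _ _).trans ?_
    refine mul_le_mul_of_nonneg_right ?_ (norm_nonneg _)
    exact Real.le_sqrt_of_sq_le (by rw [hFnormsq]; exact hEbd (φ n))
  have h0 : Tendsto (fun n : ℕ => 2*r.toReal + 2/((φ n : ℝ) + 1)) atTop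
      (nhds (2*r.toReal)) := by
    have h1 : Tendsto (fun n : ℕ => 1/((n:ℝ)+1)) atTop (nhds 0) :=
      tendsto_one_div_add_atTop_nhds_zero_nat
    have h2 := (h1.comp hφ.tendsto_atTop).const_mul (2:ℝ)
    have h4 := (tendsto_const_nhds (x := 2*r.toReal) (f := atTop (α := ℕ))).add h2
    simp only [mul_zero, add_zero] at h4
    refine h4.congr fun n => ?_
    simp only [Function.comp_apply]
    ring
  have hbl : Tendsto (fun n => Real.sqrt (2*r.toReal + 2/((φ n:ℝ)+1)) * ‖G‖) atTop
      (nhds (Real.sqrt (2*r.toReal) * ‖G‖)) :=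
    ((Real.continuous_sqrt.tendsto _).comp h0).mul_const _
  have hGG : ‖G‖^2 ≤ Real.sqrt (2*r.toReal) * ‖G‖ := by
    rw [← real_inner_self_eq_norm_sq]
    exact le_of_tendsto_of_tendsto' (hweak G) hbl hb
  have hR : (0:ℝ) ≤ 2 * r.toReal := by linarith
  have hGle : ‖G‖^2 ≤ 2 * r.toReal := by
    rcases le_or_gt ‖G‖ 0 with h0' | h0'
    · have hg0 : ‖G‖ = 0 := le_antisymm h0' (norm_nonneg _)
      rw [hg0]; simpa using hR
    · have h1 : ‖G‖ ≤ Real.sqrt (2*r.toReal) := by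
        rw [pow_two] at hGG
        exact le_of_mul_le_mul_right hGG h0'
      calc ‖G‖^2 ≤ Real.sqrt (2*r.toReal)^2 := by
            exact pow_le_pow_left₀ (norm_nonneg _) h1 2
        _ = 2*r.toReal := Real.sq_sqrt hR
  have hfinal : ENNReal.ofReal ((1/2) * ∫ s in Set.Ioc 0 T, ‖(⇑G) s‖^2) ≤ r := by
    have h1 : (1/2) * (∫ s in Set.Ioc 0 T, ‖(⇑G) s‖^2) ≤ r.toReal := by
      rw [← hGnormsq]; linarith
    calc ENNReal.ofReal _ ≤ ENNReal.ofReal r.toReal := ENNReal.ofReal_le_ofReal h1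
      _ = r := ENNReal.ofReal_toReal hr
  have hmemset : ENNReal.ofReal ((1/2) * ∫ s in Set.Ioc 0 T, ‖(⇑G) s‖^2) ∈
      { c : ℝ≥0∞ | ∃ h : ℝ → EuclideanSpace ℝ (Fin m),
        MemLp h 2 (volume.restrict (Set.Icc 0 T)) ∧
        f = Γ x (primitivePath m h) ∧
        c = ENNReal.ofReal ((1 / 2) * ∫ s in Set.Ioc 0 T, ‖h s‖ ^ 2) } :=
    ⟨⇑G, hGmem, hfeqG, rfl⟩
  calc rateFn d m T Γ x f ≤ _ := sInf_le hmemset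
    _ ≤ r := hfinal
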